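/- arXiv:0806.3036 — 3 statements merged into one kernel-verified Lean document; each statement's English description precedes it below -/
import Mathlib

section
/- Let f : X → X be a homeomorphism of a compact metric space and φ : X → ℝ continuous. If for every x ∈ X there exists n ≥ 1 with ∑_{i=0}^{n-1} φ(fⁱx) < log ν (ν < 1 fixed), then the first such time n₀(x) is uniformly bounded over X, and consequently there exist C > 0 and λ ∈ (ν^{1/N}, 1) with exp(∑_{i=0}^{n-1} φ(fⁱx)) ≤ C λⁿ for all x ∈ X and n ≥ 0. -/
/-!
Each set `{x | Sₙφ(x) < log ν}` is open, so by compactness finitely many of them cover `X`,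
which bounds the first crossing time by some `N`. Cutting any orbit segment into consecutive
pieces of length at most `N` on which the Birkhoff sum is below `log ν` then gives
`Sₙφ(x) ≤ (n / N) log ν + const`, i.e. exponential decay at rate `ν^{1/N}`; any `λ`
strictly between `ν^{1/N}` and `1` works.
-/

open Finset Real

section Birkhoff

variable {α : Type*}

theorem Continuous.birkhoffSum [TopologicalSpace α] {f : α → α} {g : α → ℝ}
    (hf : Continuous f) (hg : Continuous g) (n : ℕ) : Continuous (birkhoffSum f g n) :=
  continuous_finsetSum _ fun i _ => hg.comp (hf.iterate i)

theorem exists_forall_exists_birkhoffSum_lt_of_compactSpace [TopologicalSpace α] [CompactSpace α]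
    {f : α → α} {g : α → ℝ} {c : ℝ} (hf : Continuous f) (hg : Continuous g)
    (h : ∀ x, ∃ n, 1 ≤ n ∧ birkhoffSum f g n x < c) :
    ∃ N, 1 ≤ N ∧ ∀ x, ∃ n, 1 ≤ n ∧ n ≤ N ∧ birkhoffSum f g n x < c := by
  obtain ⟨s, hs⟩ := isCompact_univ.elim_finite_subcover
    (fun n => {x | birkhoffSum f g (n + 1) x < c})
    (fun n => isOpen_lt ((hf.birkhoffSum hg) _) continuous_const)
    fun x _ => by
      obtain ⟨n, hn, hx⟩ := h x
      exact Set.mem_iUnion.2 ⟨n - 1, by rwa [Nat.sub_add_cancel hn]⟩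
  refine ⟨s.sup id + 1, Nat.le_add_left 1 _, fun x => ?_⟩
  obtain ⟨n, hn, hx⟩ := Set.mem_iUnion₂.1 (hs (Set.mem_univ x))
  exact ⟨n + 1, Nat.le_add_left 1 n, Nat.add_le_add_right (le_sup (f := id) hn) 1, hx⟩

theorem birkhoffSum_le_of_forall_exists_le {f : α → α} {g : α → ℝ} {c M : ℝ} {N : ℕ}
    (hc : c ≤ 0) (hM : 0 ≤ M) (hgM : ∀ x, g x ≤ M)
    (h : ∀ x, ∃ n, 1 ≤ n ∧ n ≤ N ∧ birkhoffSum f g n x ≤ c) (n : ℕ) (x : α) :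
    birkhoffSum f g n x ≤ n * (c / N) + (N * M - c) := by
  induction n using Nat.strong_induction_on generalizing x with
  | _ n ih =>
    obtain ⟨m, hm1, hmN, hmc⟩ := h x
    have hN : (0 : ℝ) < N := by exact_mod_cast hm1.trans hmN
    have hmN' : (m : ℝ) ≤ N := by exact_mod_cast hmN
    by_cases hn : n ≤ N
    · have hnN : (n : ℝ) ≤ N := by exact_mod_cast hn
      have hsum : birkhoffSum f g n x ≤ n * M := by
        simpa [birkhoffSum] using sum_le_sum fun i (_ : i ∈ range n) => hgM (f^[i] x)
      have : c ≤ n * (c / N) := by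
        rw [mul_div_assoc', le_div_iff₀ hN]; nlinarith
      nlinarith [mul_le_mul_of_nonneg_right hnN hM]
    · obtain ⟨k, rfl⟩ := Nat.exists_eq_add_of_le (hmN.trans (not_le.1 hn).le)
      have hrest := ih k (by omega) (f^[m] x)
      have : c ≤ m * (c / N) := by
        rw [mul_div_assoc', le_div_iff₀ hN]; nlinarith
      rw [birkhoffSum_add]
      push_cast
      nlinarith

end Birkhoff

theorem stmt3_general {X : Type*} [MetricSpace X] [CompactSpace X]
    (f : X → X) (hf : Continuous f)
    (φ : X → ℝ) (hφ : Continuous φ) (ν : ℝ) (hν0 : 0 < ν) (hν1 : ν < 1)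
    (h : ∀ x : X, ∃ n : ℕ, 1 ≤ n ∧ ∑ i ∈ Finset.range n, φ (f^[i] x) < Real.log ν) :
    ∃ N : ℕ, 1 ≤ N ∧
      (∀ x : X, ∃ n : ℕ, 1 ≤ n ∧ n ≤ N ∧ ∑ i ∈ Finset.range n, φ (f^[i] x) < Real.log ν) ∧
      ∃ C : ℝ, 0 < C ∧ ∃ lam : ℝ, ν ^ (1 / (N : ℝ)) < lam ∧ lam < 1 ∧
        ∀ x : X, ∀ n : ℕ,
          Real.exp (∑ i ∈ Finset.range n, φ (f^[i] x)) ≤ C * lam ^ n := by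
  obtain ⟨N, hN, hfirst⟩ := exists_forall_exists_birkhoffSum_lt_of_compactSpace hf hφ h
  obtain ⟨M, hM⟩ := (isCompact_range hφ).bddAbove
  have hφM (x : X) : φ x ≤ max M 0 := (hM ⟨x, rfl⟩).trans (le_max_left _ _)
  have hbound := birkhoffSum_le_of_forall_exists_le (Real.log_neg hν0 hν1).le
    (le_max_right M 0) hφM fun x => (hfirst x).imp fun _ ⟨h1, h2, h3⟩ => ⟨h1, h2, h3.le⟩
  have hroot : ν ^ (1 / (N : ℝ)) = exp (log ν / N) := by
    rw [rpow_def_of_pos hν0, mul_one_div]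
  obtain ⟨lam, hlam, hlam1⟩ :=
    exists_between (rpow_lt_one (z := 1 / (N : ℝ)) hν0.le hν1 (by positivity))
  refine ⟨N, hN, hfirst, exp (N * max M 0 - log ν), exp_pos _, lam, hlam, hlam1, fun x n => ?_⟩
  calc exp (∑ i ∈ range n, φ (f^[i] x))
      ≤ exp (n * (log ν / N) + (N * max M 0 - log ν)) := exp_le_exp.2 (hbound n x)
    _ = exp (N * max M 0 - log ν) * (ν ^ (1 / (N : ℝ))) ^ n := by
      rw [exp_add, exp_nat_mul, hroot, mul_comm]
    _ ≤ exp (N * max M 0 - log ν) * lam ^ n := by gcongr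

/-- If every point of a compact space has some time `n ≥ 1` at which the Birkhoff sum of `φ`
drops below `log ν` (with `0 < ν < 1`), then the first such time is uniformly bounded by
some `N`, and consequently there are `C > 0` and `λ ∈ (ν^{1/N}, 1)` with
`exp(Sₙφ(x)) ≤ C λⁿ` for all `x` and `n ≥ 0`. -/
theorem stmt3 {X : Type*} [MetricSpace X] [CompactSpace X] [Nonempty X]
    (f : X → X) (hf : Continuous f) (hbij : Function.Bijective f)
    (φ : X → ℝ) (hφ : Continuous φ) (ν : ℝ) (hν0 : 0 < ν) (hν1 : ν < 1)
    (h : ∀ x : X, ∃ n : ℕ, 1 ≤ n ∧ ∑ i ∈ Finset.range n, φ (f^[i] x) < Real.log ν) :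
    ∃ N : ℕ, 1 ≤ N ∧
      (∀ x : X, ∃ n : ℕ, 1 ≤ n ∧ n ≤ N ∧ ∑ i ∈ Finset.range n, φ (f^[i] x) < Real.log ν) ∧
      ∃ C : ℝ, 0 < C ∧ ∃ lam : ℝ, ν ^ (1 / (N : ℝ)) < lam ∧ lam < 1 ∧
        ∀ x : X, ∀ n : ℕ,
          Real.exp (∑ i ∈ Finset.range n, φ (f^[i] x)) ≤ C * lam ^ n :=
  stmt3_general f hf φ hφ ν hν0 hν1 h
end

section
/- Suppose x ∈ H satisfies ‖Df⁻ⁿ|_{F(x)}‖ ≥ γ₂ⁿ for all n ≥ 0 where F is one-dimensional (equivalently, with a_i = log‖Df⁻¹|_{F(f^{-i}x)}‖, the sums ∑_{i=0}^{n-1} a_i ≥ n log γ₂). Then for any γ₂ < γ' < 1 there exist infinitely many Pliss times: integers n such that ∑_{i=m}^{n-1} a_i ≥ (n−m) log γ' for all 0 ≤ m ≤ n. (Pliss' Lemma for real sequences.) -/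
/-!
Put `S n = ∑_{i<n} (a i - c')`. The hypothesis gives `S n ≥ n (c - c') → ∞`, so `S` has
infinitely many record times `n` (with `S m ≤ S n` for all `m ≤ n`), and at a record time
`∑_{i∈[m,n)} a i - (n - m) c' = S n - S m ≥ 0`.
-/

open Filter Finset

lemma tendsto_sum_range_sub_atTop {a : ℕ → ℝ} {c c' : ℝ}
    (hsum : ∀ n : ℕ, 1 ≤ n → (n : ℝ) * c ≤ ∑ i ∈ range n, a i) (hc' : c' < c) :
    Tendsto (fun n => ∑ i ∈ range n, (a i - c')) atTop atTop := by
  refine tendsto_atTop_mono' atTop ?_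
    (tendsto_natCast_atTop_atTop.atTop_mul_const (sub_pos.2 hc'))
  filter_upwards [eventually_ge_atTop 1] with n hn
  rw [sum_sub_distrib, sum_const, card_range, nsmul_eq_mul]
  linarith [hsum n hn]

lemma mul_le_sum_Ico_of_record {a : ℕ → ℝ} {c' : ℝ} {n : ℕ}
    (hrecord : ∀ m ≤ n, ∑ i ∈ range m, (a i - c') ≤ ∑ i ∈ range n, (a i - c'))
    {m : ℕ} (hm : m ≤ n) :
    ((n : ℝ) - m) * c' ≤ ∑ i ∈ Ico m n, a i := by
  have hexcess : 0 ≤ ∑ i ∈ Ico m n, (a i - c') := by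
    rw [sum_Ico_eq_sub _ hm]
    exact sub_nonneg.2 (hrecord m hm)
  rwa [sum_sub_distrib, sum_const, Nat.card_Ico, nsmul_eq_mul, Nat.cast_sub hm,
    sub_nonneg] at hexcess

theorem stmt4_general (a : ℕ → ℝ) (c c' : ℝ)
    (hsum : ∀ n : ℕ, 1 ≤ n → (n : ℝ) * c ≤ ∑ i ∈ Finset.range n, a i)
    (hc' : c' < c) :
    ∀ N : ℕ, ∃ n : ℕ, N ≤ n ∧
      ∀ m : ℕ, m ≤ n → ((n : ℝ) - (m : ℝ)) * c' ≤ ∑ i ∈ Finset.Ico m n, a i := by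
  intro N
  obtain ⟨n, hNn, hrecord⟩ := high_scores (tendsto_sum_range_sub_atTop hsum hc') N
  refine ⟨n, hNn, fun m hm => mul_le_sum_Ico_of_record (fun k hk => ?_) hm⟩
  rcases hk.lt_or_eq with hlt | rfl
  exacts [(hrecord k hlt).le, le_rfl]

/-- Pliss' Lemma for real sequences: if `(a i)` is bounded above by `K` and all initial
sums satisfy `∑_{i<n} a i ≥ n·c`, then for any `c' < c` there are infinitely many Pliss
times `n`, i.e. times such that `∑_{i∈[m,n)} a i ≥ (n-m)·c'` for all `0 ≤ m ≤ n`. -/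
theorem stmt4 (a : ℕ → ℝ) (K c c' : ℝ)
    (hK : ∀ i, a i ≤ K)
    (hsum : ∀ n : ℕ, 1 ≤ n → (n : ℝ) * c ≤ ∑ i ∈ Finset.range n, a i)
    (hc' : c' < c) :
    ∀ N : ℕ, ∃ n : ℕ, N ≤ n ∧
      ∀ m : ℕ, m ≤ n → ((n : ℝ) - (m : ℝ)) * c' ≤ ∑ i ∈ Finset.Ico m n, a i :=
  stmt4_general a c c' hsum hc'
end

section
/- Uniform expansion from uniform bundle estimate: if a continuous one-dimensional bundle F over a compact invariant set satisfies that for every x there exists n(x) with ‖Df^{−n(x)}|_{F(x)}‖ < ν < 1, and the function x ↦ ‖Df^{−n}|_{F(x)}‖ is continuous for each n, then there exist C > 0 and σ ∈ (0,1) with ‖Df^{−n}|_{F(x)}‖ ≤ C σⁿ for all x and all n ≥ 0 (i.e. F is uniformly expanding). -/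
/-!
By compactness and continuity, finitely many of the open sets `{y | G y n < ν}` cover the space,
so every point has a contracting time `k ∈ [1, N]` for one fixed `N`. With `σ = ν ^ (1 / N)` this
reads `G x k ≤ σ ^ k`, and the cocycle identity `G x n = G (f^[k] x) (n - k) * G x k` propagates a
bound `C σ ^ n` from the times `n ≤ N` to all times by strong induction.
-/

open Set

def IsMulCocycle {X : Type*} (f : X → X) (G : X → ℕ → ℝ) : Prop :=
  ∀ x (n m : ℕ), G x (n + m) = G (f^[m] x) n * G x m

theorem exists_uniform_bound_of_forall_exists_lt {X : Type*} [TopologicalSpace X]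
    [CompactSpace X] {g : ℕ → X → ℝ} (hg : ∀ n, Continuous (g n)) {ν : ℝ} {P : ℕ → Prop}
    (h : ∀ x, ∃ n, P n ∧ g n x < ν) : ∃ N, ∀ x, ∃ n ≤ N, P n ∧ g n x < ν := by
  obtain ⟨t, ht⟩ := isCompact_univ.elim_finite_subcover (fun n => {x | P n ∧ g n x < ν})
    (fun n => isOpen_const.inter (isOpen_lt (hg n) continuous_const))
    (fun x _ => mem_iUnion.2 (h x))
  refine ⟨t.sup id, fun x => ?_⟩
  obtain ⟨n, hnt, hn⟩ := mem_iUnion₂.1 (ht (mem_univ x))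
  exact ⟨n, Finset.le_sup (f := id) hnt, hn⟩

theorem exists_pos_forall_le_of_continuous {X : Type*} [TopologicalSpace X] [CompactSpace X]
    {g : X → ℕ → ℝ} (hg : ∀ n, Continuous fun x => g x n) (N : ℕ) :
    ∃ M > 0, ∀ n ≤ N, ∀ x, g x n ≤ M := by
  have hbdd : BddAbove (⋃ n ∈ Iic N, range fun x => g x n) :=
    (finite_Iic N).bddAbove_biUnion.2 fun n _ => (isCompact_range (hg n)).bddAbove
  obtain ⟨M, hM1, hM⟩ := (bddAbove_iff_exists_ge 1).1 hbdd
  exact ⟨M, one_pos.trans_le hM1, fun n hn x => hM _ (mem_biUnion (mem_Iic.2 hn) (mem_range_self x))⟩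

theorem IsMulCocycle.le_mul_pow {X : Type*} {f : X → X} {G : X → ℕ → ℝ} (hG : IsMulCocycle f G)
    (hG0 : ∀ x n, 0 ≤ G x n) {N : ℕ} {C σ : ℝ}
    (hgood : ∀ x, ∃ k, 1 ≤ k ∧ k ≤ N ∧ G x k ≤ σ ^ k)
    (hbase : ∀ x, ∀ n ≤ N, G x n ≤ C * σ ^ n) (x : X) (n : ℕ) : G x n ≤ C * σ ^ n := by
  induction n using Nat.strong_induction_on generalizing x with
  | _ n ih =>
    rcases le_or_gt n N with hnN | hNn
    · exact hbase x n hnN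
    obtain ⟨k, hk1, hkN, hk⟩ := hgood x
    have hsplit : n - k + k = n := Nat.sub_add_cancel (by omega)
    have hrest := ih (n - k) (by omega) (f^[k] x)
    calc G x n = G (f^[k] x) (n - k) * G x k := by rw [← hG, hsplit]
      _ ≤ C * σ ^ (n - k) * σ ^ k := mul_le_mul hrest hk (hG0 x k) ((hG0 _ _).trans hrest)
      _ = C * σ ^ n := by rw [mul_assoc, ← pow_add, hsplit]

theorem le_rpow_inv_natCast_pow {ν : ℝ} (hν0 : 0 ≤ ν) (hν1 : ν ≤ 1) {k N : ℕ} (hkN : k ≤ N) :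
    ν ≤ (ν ^ (N⁻¹ : ℝ)) ^ k := by
  rcases Nat.eq_zero_or_pos N with rfl | hN
  · simpa [Nat.le_zero.1 hkN] using hν1
  calc ν = (ν ^ (N⁻¹ : ℝ)) ^ N := (Real.rpow_inv_natCast_pow hν0 hN.ne').symm
    _ ≤ (ν ^ (N⁻¹ : ℝ)) ^ k :=
      pow_le_pow_of_le_one (by positivity) (Real.rpow_le_one hν0 hν1 (by positivity)) hkN

theorem le_div_pow_mul_pow {M σ : ℝ} (hM : 0 ≤ M) (hσ0 : 0 < σ) (hσ1 : σ ≤ 1) {n N : ℕ}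
    (hnN : n ≤ N) : M ≤ M / σ ^ N * σ ^ n := by
  calc M = M / σ ^ N * σ ^ N := by field_simp
    _ ≤ M / σ ^ N * σ ^ n :=
      mul_le_mul_of_nonneg_left (pow_le_pow_of_le_one hσ0.le hσ1 hnN) (by positivity)

theorem stmt19_general {Λ : Type*} [MetricSpace Λ] [CompactSpace Λ]
    (f : Λ → Λ)
    (G : Λ → ℕ → ℝ)
    (hpos : ∀ x n, 0 < G x n)
    (hcont : ∀ n, Continuous fun x => G x n)
    (hcoc : ∀ x (n m : ℕ), G x (n + m) = G (f^[m] x) n * G x m)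
    (ν : ℝ) (hν0 : 0 < ν) (hν1 : ν < 1)
    (h : ∀ x, ∃ n : ℕ, 1 ≤ n ∧ G x n < ν) :
    ∃ C : ℝ, 0 < C ∧ ∃ σ : ℝ, 0 < σ ∧ σ < 1 ∧ ∀ x, ∀ n : ℕ, G x n ≤ C * σ ^ n := by
  obtain ⟨N, hN⟩ := exists_uniform_bound_of_forall_exists_lt (g := fun n x => G x n) hcont h
  obtain ⟨M, hM0, hM⟩ := exists_pos_forall_le_of_continuous hcont (N + 1)
  set σ : ℝ := ν ^ (((N + 1 : ℕ) : ℝ)⁻¹)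
  have hσ0 : 0 < σ := Real.rpow_pos_of_pos hν0 _
  have hσ1 : σ < 1 := Real.rpow_lt_one hν0.le hν1 (by positivity)
  refine ⟨M / σ ^ (N + 1), by positivity, σ, hσ0, hσ1, ?_⟩
  refine IsMulCocycle.le_mul_pow hcoc (fun x n => (hpos x n).le) (fun x => ?_) fun x n hn =>
    (hM n hn x).trans (le_div_pow_mul_pow hM0.le hσ0 hσ1.le hn)
  obtain ⟨k, hkN, hk1, hk⟩ := hN x
  exact ⟨k, hk1, by omega, hk.le.trans (le_rpow_inv_natCast_pow hν0.le hν1.le (by omega))⟩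

/-- Uniform expansion from a pointwise estimate: let `G x n = ‖Df^{-n}|_{F(x)}‖` be a
positive continuous multiplicative cocycle over `f` on a compact space, with the property
that every `x` has some `n ≥ 1` with `G x n < ν < 1`. Then there are `C > 0` and
`σ ∈ (0,1)` with `G x n ≤ C σⁿ` for all `x` and `n ≥ 0` (uniform expansion of `F`). -/
theorem stmt19 {Λ : Type*} [MetricSpace Λ] [CompactSpace Λ] [Nonempty Λ]
    (f : Λ → Λ) (hf : Continuous f) (hbij : Function.Bijective f)
    (G : Λ → ℕ → ℝ)
    (hpos : ∀ x n, 0 < G x n)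
    (hcont : ∀ n, Continuous fun x => G x n)
    (hcoc : ∀ x (n m : ℕ), G x (n + m) = G (f^[m] x) n * G x m)
    (ν : ℝ) (hν0 : 0 < ν) (hν1 : ν < 1)
    (h : ∀ x, ∃ n : ℕ, 1 ≤ n ∧ G x n < ν) :
    ∃ C : ℝ, 0 < C ∧ ∃ σ : ℝ, 0 < σ ∧ σ < 1 ∧ ∀ x, ∀ n : ℕ, G x n ≤ C * σ ^ n :=
  stmt19_general f G hpos hcont hcoc ν hν0 hν1 h
end
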